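/- Let M ⊂ ℝ^d be an open parameter set and φ : X × M → ℝ generate the parametric class F = {φ(·; θ) : θ ∈ M}. Let M_* be the set of minimizers of θ ↦ E(φ(X,θ) − Y)². Suppose (i) for constants a, b > 0 the estimation error is (a,b)-sharp: for every θ ∈ M there exists θ_* ∈ M_* with (a/b)‖θ − θ_*‖ ≤ (E(φ(X,θ) − φ(X,θ_*))²)^b; and (ii) the gradient ∇_θ φ(x,θ) exists and satisfies ‖∇_θ φ(x,θ)‖ ≤ C for all (x,θ), and M is convex (so segments [θ, θ_*] lie in M). Then for every θ ∈ M there exists θ_* ∈ M_* with sup_{x ∈ X} |φ(x,θ) − φ(x,θ_*)| ≤ (Cb/a) (E(φ(X,θ) − φ(X,θ_*))²)^b; i.e., the shifted class F − {f_*} satisfies ‖f‖_{L^∞} ≤ (Cb/a) ‖f‖_{L²}^{2b} and is hence (Cb/a, 2b)-Ψ_∞. -/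
import Mathlib


open MeasureTheory

/-- Smoothly parameterized classes with sharp estimation error are weakly sub-Gaussian:
if the estimation error is `(a,b)`-sharp and `θ ↦ φ(x,θ)` has gradients uniformly bounded
by `C` on the convex open parameter set `M`, then for every `θ ∈ M` there is a population
minimizer `θ_* ∈ M_*` with
`sup_x |φ(x,θ) − φ(x,θ_*)| ≤ (Cb/a)(E(φ(X,θ) − φ(X,θ_*))²)^b`; i.e. the shifted class
`F − {f_*}` is `(Cb/a, 2b)`-`Ψ_∞`. -/
theorem parametric_sharpness_weak_subgaussian
    {Ω 𝕏 : Type*} [MeasurableSpace Ω] (μ : Measure Ω) [IsProbabilityMeasure μ]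
    (d : ℕ) (M : Set (EuclideanSpace ℝ (Fin d))) (hMopen : IsOpen M) (hMconv : Convex ℝ M)
    (φ : 𝕏 → EuclideanSpace ℝ (Fin d) → ℝ)
    (X : Ω → 𝕏) (Y : Ω → ℝ)
    (a b C : ℝ) (ha : 0 < a) (hb : 0 < b) (hC : 0 < C)
    -- (ii) uniformly bounded gradients
    (G : 𝕏 → EuclideanSpace ℝ (Fin d) → EuclideanSpace ℝ (Fin d))
    (hgrad : ∀ x : 𝕏, ∀ θ ∈ M, HasGradientAt (φ x) (G x θ) θ)
    (hgradbd : ∀ x : 𝕏, ∀ θ ∈ M, ‖G x θ‖ ≤ C)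
    -- (i) (a,b)-sharpness of the estimation error, with M_* the set of population minimizers
    (hsharp : ∀ θ ∈ M, ∃ θs ∈ {θ' ∈ M | ∀ θ'' ∈ M,
        (∫ ω, (φ (X ω) θ' - Y ω) ^ 2 ∂μ) ≤ ∫ ω, (φ (X ω) θ'' - Y ω) ^ 2 ∂μ},
      a / b * ‖θ - θs‖ ≤ (∫ ω, (φ (X ω) θ - φ (X ω) θs) ^ 2 ∂μ) ^ b) :
    ∀ θ ∈ M, ∃ θs ∈ {θ' ∈ M | ∀ θ'' ∈ M,
        (∫ ω, (φ (X ω) θ' - Y ω) ^ 2 ∂μ) ≤ ∫ ω, (φ (X ω) θ'' - Y ω) ^ 2 ∂μ},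
      ∀ x : 𝕏, |φ x θ - φ x θs| ≤
        C * b / a * (∫ ω, (φ (X ω) θ - φ (X ω) θs) ^ 2 ∂μ) ^ b := by
  intro θ hθ
  obtain ⟨θs, hθsM, hθsb⟩ := hsharp θ hθ
  refine ⟨θs, hθsM, fun x => ?_⟩
  have hlip : ∀ x : 𝕏, ‖φ x θ - φ x θs‖ ≤ C * ‖θ - θs‖ := by
    intro x
    have := Convex.norm_image_sub_le_of_norm_hasFDerivWithin_le
      (f := φ x) (f' := fun θ' => InnerProductSpace.toDual ℝ _ (G x θ'))
      (fun θ' hθ' => ((hgrad x θ' hθ').hasFDerivAt).hasFDerivWithinAt)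
      (fun θ' hθ' => by
        simpa using hgradbd x θ' hθ') hMconv hθsM.1 hθ
    simpa using this
  calc ‖φ x θ - φ x θs‖ ≤ C * ‖θ - θs‖ := hlip x
    _ ≤ C * ((b / a) * (∫ ω, (φ (X ω) θ - φ (X ω) θs) ^ 2 ∂μ) ^ b) := by
        gcongr
        rw [div_mul_eq_mul_div, le_div_iff₀ ha]
        calc ‖θ - θs‖ * a = a / b * ‖θ - θs‖ * b := by field_simp
          _ ≤ _ := by
            have := hθsb
            nlinarith [norm_nonneg (θ - θs)]
    _ = C * b / a * (∫ ω, (φ (X ω) θ - φ (X ω) θs) ^ 2 ∂μ) ^ b := by ring
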